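/- arXiv:2406.01979 — 3 statements merged into one kernel-verified Lean document; each statement's English description precedes it below -/
import Mathlib

section
/- Let n ≥ 9 and let F be a spanning facet of Δ₃(W_n) for the shelling order ≺, with F ∈ T_s and F^c = {α_s} ⊔ {s_1, s_2}. Then α_s ∉ {0, 1, 2, n−2, n−1} and s_2 = n−1. -/
open Finset

/-- The squared cycle graph `Wₙ` on the vertex set `{0, 1, …, n−1} ⊆ ℕ`:
`x` and `y` are adjacent iff `x − y ≡ ±1, ±2 (mod n)`. -/
def sqCycle (n : ℕ) : SimpleGraph ℕ where
  Adj x y := x < n ∧ y < n ∧ x ≠ y ∧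
    ((x + 1) % n = y ∨ (x + 2) % n = y ∨ (y + 1) % n = x ∨ (y + 2) % n = x)
  symm := by
    constructor
    rintro x y ⟨hx, hy, hxy, h⟩
    exact ⟨hy, hx, hxy.symm, by tauto⟩
  loopless := by
    constructor
    rintro x ⟨-, -, hxx, -⟩
    exact hxx rfl

/-- The complement `F^c` of `F` in the vertex set of `Wₙ`. -/
def cmpl (n : ℕ) (F : Finset ℕ) : Finset ℕ := Finset.range n \ F

/-- `F` is a facet of the 3-cut complex `Δ₃(Wₙ)` : an `(n−3)`-subset of the
vertex set whose complement induces a disconnected subgraph. -/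
def IsFacet (n : ℕ) (F : Finset ℕ) : Prop :=
  F ⊆ Finset.range n ∧ F.card = n - 3 ∧
    ¬ ((sqCycle n).induce (↑(cmpl n F) : Set ℕ)).Connected

/-- `m = (n+1)/2` if `n` is odd and `m = n/2` if `n` is even. -/
def mVal (n : ℕ) : ℕ := (n + 1) / 2

/-- `α_t = m + (−1)^(t−1) ⌊t/2⌋ (mod n)`. -/
def alphaSeq (n t : ℕ) : ℕ :=
  ((((mVal n : ℤ) + (-1) ^ (t - 1) * ((t / 2 : ℕ) : ℤ)) % (n : ℤ))).toNat

/-- `x <_O y` : `x` appears strictly before `y` in `O = (α_1, …, α_n)`. -/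
def ltO (n x y : ℕ) : Prop :=
  ∃ s t : ℕ, 1 ≤ s ∧ s < t ∧ t ≤ n ∧ alphaSeq n s = x ∧ alphaSeq n t = y

/-- `F ∈ T_s` : `α_s` is the `<_O`-least element of `F^c`. -/
def classT (n s : ℕ) (F : Finset ℕ) : Prop :=
  1 ≤ s ∧ s ≤ n ∧ alphaSeq n s ∈ cmpl n F ∧
    ∀ x ∈ cmpl n F, x ≠ alphaSeq n s → ltO n (alphaSeq n s) x

/-- `F ∈ T_s` together with the decomposition `F^c = {α_s} ⊔ {s₁, s₂}`, `s₁ < s₂`. -/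
def cDecomp (n s s1 s2 : ℕ) (F : Finset ℕ) : Prop :=
  classT n s F ∧ s1 < s2 ∧ alphaSeq n s ≠ s1 ∧ alphaSeq n s ≠ s2 ∧
    cmpl n F = {alphaSeq n s, s1, s2}

/-- The order `≪` on facets. -/
def llt (n : ℕ) (F F' : Finset ℕ) : Prop :=
  ∃ s t s1 s2 t1 t2, cDecomp n s s1 s2 F ∧ cDecomp n t t1 t2 F' ∧
    (s < t ∨ (s = t ∧ (s1 < t1 ∨ (s1 = t1 ∧ s2 < t2))))

/-- The exceptional set `D` of facets (conditions (D1)–(D4)). -/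
def memD (n : ℕ) (F : Finset ℕ) : Prop :=
  ∃ s, classT n s F ∧
    ((alphaSeq n s = mVal n + 1 ∧
        cmpl n F = {alphaSeq n s, alphaSeq n s - 3, alphaSeq n s + 1}) ∨
      (alphaSeq n s = mVal n - 1 ∧
        cmpl n F = {alphaSeq n s, alphaSeq n s - 1, alphaSeq n s + 3}) ∨
      (alphaSeq n s = mVal n + 1 ∧
        cmpl n F = {alphaSeq n s, alphaSeq n s - 4, alphaSeq n s - 3}) ∨
      (mVal n - 1 ≤ alphaSeq n s ∧ alphaSeq n s ≤ n - 6 ∧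
        cmpl n F = {alphaSeq n s, alphaSeq n s + 3, alphaSeq n s + 4}))

/-- The shelling order `≺` on facets. -/
def precOrd (n : ℕ) (F F' : Finset ℕ) : Prop :=
  (¬ memD n F ∧ ¬ memD n F' ∧ llt n F F') ∨
  (memD n F ∧ ¬ memD n F' ∧ ∃ s t, classT n s F ∧ classT n t F' ∧ s < t) ∨
  (¬ memD n F ∧ memD n F' ∧ ∃ s t, classT n s F ∧ classT n t F' ∧ s ≤ t) ∨
  (memD n F ∧ memD n F' ∧ llt n F F')

/-- `F` is a spanning facet for the shelling order `≺`. -/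
def IsSpanningFacet (n : ℕ) (F : Finset ℕ) : Prop :=
  IsFacet n F ∧ ∀ lam ∈ F, ∃ G, IsFacet n G ∧ precOrd n G F ∧ G ∩ F = F.erase lam

/-- Condition (S1): `α_s = 3` and `s₁ ∈ V∖({0,1,…,2m−4} ∪ {n−1})`. -/
def condS1 (n a s1 : ℕ) : Prop :=
  a = 3 ∧ s1 ∈ Finset.range n \ (Finset.range (2 * mVal n - 3) ∪ {n - 1})

/-- Condition (S2): `4 ≤ α_s ≤ m−2` and
`s₁ ∈ V∖({α_s−4, α_s−3, α_s−2} ∪ {α_s, …, 2m−α_s−1} ∪ {n−1})`. -/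
def condS2 (n a s1 : ℕ) : Prop :=
  4 ≤ a ∧ a ≤ mVal n - 2 ∧
    s1 ∈ Finset.range n \
      (({a - 4, a - 3, a - 2} : Finset ℕ) ∪ Finset.Ico a (2 * mVal n - a) ∪ {n - 1})

/-- Condition (S3): `m−1 ≤ α_s ≤ n−3` and
`s₁ ∈ V∖({ω, ω+1, …, α_s+3 (mod n)} ∪ {y})`, with `ω = min{2m−α_s, α_s−4}` and
`y = n−1` if `α_s < n−4`, `y = 0` if `α_s = n−4`, `y = 1` if `α_s > n−4`. -/
def condS3 (n a s1 : ℕ) : Prop :=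
  mVal n - 1 ≤ a ∧ a ≤ n - 3 ∧
    s1 ∈ Finset.range n \
      ((Finset.Ico (min (2 * mVal n - a) (a - 4)) (a + 4)).image (· % n) ∪
        {if a < n - 4 then n - 1 else if a = n - 4 then 0 else 1})

/-- The set `S` of facets. -/
def memS (n : ℕ) (F : Finset ℕ) : Prop :=
  IsFacet n F ∧ ∃ s s1, cDecomp n s s1 (n - 1) F ∧
    (condS1 n (alphaSeq n s) s1 ∨ condS2 n (alphaSeq n s) s1 ∨ condS3 n (alphaSeq n s) s1)

/-!
A vertex `λ` adjacent in `Wₙ` to every other vertex of `F^c` rules out spanning: if `λ ∈ F^c`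
then `F^c` is connected, and if `λ ∈ F` then so is `G^c ⊆ F^c ∪ {λ}` for the facet `G` with
`G ∩ F = F ∖ {λ}`. The vertices `0, 1, 2, n−2, n−1` fill the last five places of `O`, so if `α_s`
is one of them then all of `F^c` is, and `0` is such a `λ`; each facet of `D` has such a `λ` as
well (`α_s ∓ 1` or `α_s ∓ 2`). Finally, if `n−1 ∉ F^c`, the facet `G` attached to `λ = n−1` lies
in some `T_t` with `t ≥ s`, since `n−1` comes after `α_s` in `O`. As `F ∉ D`, `G ≺ F` forces
`G ∉ D` and `G ≪ F`, hence `G^c = {α_s, sᵢ, n−1}`, which does not precede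
`F^c = {α_s, s₁, s₂}` lexicographically because `s₂ < n−1`.
-/

lemma two_mul_mVal (n : ℕ) : 2 * mVal n = n ∨ 2 * mVal n = n + 1 := by
  unfold mVal; omega

lemma alphaSeq_add_div_two_of_even {n t : ℕ} (ht0 : 0 < t) (ht : t ≤ n) (heven : t % 2 = 0) :
    alphaSeq n t + t / 2 = mVal n := by
  have hodd : Odd (t - 1) := by rw [Nat.odd_iff]; omega
  have := two_mul_mVal n
  unfold alphaSeq
  rw [hodd.neg_one_pow, neg_one_mul, Int.emod_eq_of_lt (by omega) (by omega)]
  omega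

lemma alphaSeq_eq_of_odd {n t : ℕ} (hodd : t % 2 = 1) :
    alphaSeq n t = (mVal n + t / 2) % n := by
  have heven : Even (t - 1) := by rw [Nat.even_iff]; omega
  unfold alphaSeq
  rw [heven.neg_one_pow, one_mul]
  exact_mod_cast Int.toNat_natCast _

lemma alphaSeq_spec {n t : ℕ} (ht0 : 0 < t) (ht : t ≤ n) :
    (t % 2 = 0 ∧ alphaSeq n t + t / 2 = mVal n) ∨
      (t % 2 = 1 ∧ mVal n + t / 2 < n ∧ alphaSeq n t = mVal n + t / 2) ∨
      (t % 2 = 1 ∧ mVal n + t / 2 = n ∧ alphaSeq n t = 0) := by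
  have := two_mul_mVal n
  rcases Nat.mod_two_eq_zero_or_one t with heven | hodd
  · exact Or.inl ⟨heven, alphaSeq_add_div_two_of_even ht0 ht heven⟩
  · rw [alphaSeq_eq_of_odd hodd]
    rcases (show mVal n + t / 2 < n ∨ mVal n + t / 2 = n by omega) with hlt | heq
    · exact Or.inr (Or.inl ⟨hodd, hlt, Nat.mod_eq_of_lt hlt⟩)
    · exact Or.inr (Or.inr ⟨hodd, heq, by rw [heq, Nat.mod_self]⟩)

lemma alphaSeq_injOn (n : ℕ) : Set.InjOn (alphaSeq n) (Set.Icc 1 n) := by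
  rintro p ⟨hp0, hp⟩ q ⟨hq0, hq⟩ h
  have := two_mul_mVal n
  have := alphaSeq_spec hp0 hp
  have := alphaSeq_spec hq0 hq
  omega

lemma alphaSeq_mem_last_five_iff {n t : ℕ} (ht0 : 0 < t) (ht : t ≤ n) :
    alphaSeq n t ∈ ({0, 1, 2, n - 2, n - 1} : Finset ℕ) ↔ n - 4 ≤ t := by
  have := two_mul_mVal n
  have := alphaSeq_spec ht0 ht
  simp only [Finset.mem_insert, Finset.mem_singleton]
  omega

section Order

variable {n s : ℕ} {F : Finset ℕ}

lemma classT.exists_index (hF : classT n s F) {x : ℕ} (hx : x ∈ cmpl n F) :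
    ∃ q, s ≤ q ∧ q ≤ n ∧ alphaSeq n q = x := by
  obtain ⟨hs0, hsn, -, hmin⟩ := hF
  rcases eq_or_ne x (alphaSeq n s) with rfl | hne
  · exact ⟨s, le_rfl, hsn, rfl⟩
  · obtain ⟨u, v, hu0, huv, hvn, hu, hv⟩ := hmin x hx hne
    obtain rfl := alphaSeq_injOn n ⟨hu0, huv.le.trans hvn⟩ ⟨hs0, hsn⟩ hu
    exact ⟨v, huv.le, hvn, hv⟩

lemma classT.le_of_mem_cmpl (hF : classT n s F) {p : ℕ} (hp0 : 0 < p) (hp : p ≤ n)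
    (h : alphaSeq n p ∈ cmpl n F) : s ≤ p := by
  obtain ⟨q, hsq, hqn, hq⟩ := hF.exists_index h
  rwa [alphaSeq_injOn n ⟨hp0, hp⟩ ⟨by have := hF.1; omega, hqn⟩ hq.symm]

lemma classT.unique {t : ℕ} (hs : classT n s F) (ht : classT n t F) : s = t :=
  le_antisymm (hs.le_of_mem_cmpl ht.1 ht.2.1 ht.2.2.1) (ht.le_of_mem_cmpl hs.1 hs.2.1 hs.2.2.1)

lemma cDecomp.unique {s1 s2 t t1 t2 : ℕ} (hs : cDecomp n s s1 s2 F) (ht : cDecomp n t t1 t2 F) :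
    s = t ∧ s1 = t1 ∧ s2 = t2 := by
  obtain rfl := hs.1.unique ht.1
  obtain ⟨-, hs12, hs1, hs2, hsc⟩ := hs
  obtain ⟨-, ht12, ht1, ht2, htc⟩ := ht
  have h := Finset.ext_iff.mp (hsc.symm.trans htc)
  simp only [Finset.mem_insert, Finset.mem_singleton] at h
  have := h s1; have := h s2; have := h t1; have := h t2
  omega

end Order

lemma SimpleGraph.induce_connected_of_forall_adj {V : Type*} {G : SimpleGraph V} {S : Set V}
    {c : V} (hc : c ∈ S) (h : ∀ x ∈ S, x ≠ c → G.Adj c x) : (G.induce S).Connected := by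
  rw [SimpleGraph.connected_iff_exists_forall_reachable]
  refine ⟨⟨c, hc⟩, fun ⟨x, hx⟩ => ?_⟩
  rcases eq_or_ne x c with rfl | hne
  · rfl
  · exact SimpleGraph.Adj.reachable (h x hx hne)

lemma sqCycle_adj_of {n x y : ℕ} (hn : 3 ≤ n) (hx : x < n) (hy : y < n)
    (h : x + 1 = y ∨ x + 2 = y ∨ y + 1 = x ∨ y + 2 = x ∨
      x + 1 = y + n ∨ x + 2 = y + n ∨ y + 1 = x + n ∨ y + 2 = x + n) :
    (sqCycle n).Adj x y := by
  have mod_eq {a b : ℕ} (hb : b < n) (hab : a = b ∨ a = b + n) : a % n = b := by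
    rcases hab with rfl | rfl
    · exact Nat.mod_eq_of_lt hb
    · rw [Nat.add_mod_right, Nat.mod_eq_of_lt hb]
  refine ⟨hx, hy, by omega, ?_⟩
  rcases h with h | h | h | h | h | h | h | h
  all_goals first
    | exact Or.inl (mod_eq hy (by omega))
    | exact Or.inr (Or.inl (mod_eq hy (by omega)))
    | exact Or.inr (Or.inr (Or.inl (mod_eq hx (by omega))))
    | exact Or.inr (Or.inr (Or.inr (mod_eq hx (by omega))))

lemma mem_cmpl {n x : ℕ} {F : Finset ℕ} : x ∈ cmpl n F ↔ x < n ∧ x ∉ F := by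
  simp [cmpl]

section Spanning

variable {n lam : ℕ} {F G : Finset ℕ}

lemma cmpl_subset_insert_of_inter_eq_erase (h : G ∩ F = F.erase lam) :
    cmpl n G ⊆ insert lam (cmpl n F) := by
  intro x hx
  rw [Finset.mem_insert, mem_cmpl]
  rw [mem_cmpl] at hx
  by_contra! hne
  have : x ∈ G ∩ F := h ▸ Finset.mem_erase.mpr ⟨hne.1, by tauto⟩
  exact hx.2 (Finset.mem_inter.mp this).1

lemma mem_cmpl_of_inter_eq_erase (h : G ∩ F = F.erase lam) (hlam : lam < n) (hF : lam ∈ F) :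
    lam ∈ cmpl n G := by
  refine mem_cmpl.mpr ⟨hlam, fun hG => ?_⟩
  simpa [h] using Finset.mem_inter.mpr ⟨hG, hF⟩

lemma IsSpanningFacet.not_forall_adj (hF : IsSpanningFacet n F) (hlam : lam < n) :
    ¬ ∀ x ∈ cmpl n F, x ≠ lam → (sqCycle n).Adj lam x := by
  intro hadj
  obtain ⟨⟨-, -, hFdisc⟩, hspan⟩ := hF
  by_cases hlamF : lam ∈ F
  · obtain ⟨G, ⟨-, -, hGdisc⟩, -, hGF⟩ := hspan lam hlamF
    refine hGdisc (SimpleGraph.induce_connected_of_forall_adj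
      (mem_cmpl_of_inter_eq_erase hGF hlam hlamF) fun x hx hne => hadj x ?_ hne)
    simpa [hne] using cmpl_subset_insert_of_inter_eq_erase hGF hx
  · exact hFdisc (SimpleGraph.induce_connected_of_forall_adj (mem_cmpl.mpr ⟨hlam, hlamF⟩) hadj)

lemma IsSpanningFacet.not_memD (hn : 6 ≤ n) (hF : IsSpanningFacet n F) : ¬ memD n F := by
  have star (c : ℕ) (hc : c < n) (hnear : ∀ x ∈ cmpl n F, x ≠ c →
      x < n ∧ (c + 1 = x ∨ c + 2 = x ∨ x + 1 = c ∨ x + 2 = c)) : False :=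
    hF.not_forall_adj hc fun x hx hne =>
      sqCycle_adj_of (by omega) hc (hnear x hx hne).1 (by have := (hnear x hx hne).2; omega)
  have := two_mul_mVal n
  rintro ⟨t, -, ⟨hb, hFc⟩ | ⟨hb, hFc⟩ | ⟨hb, hFc⟩ | ⟨hb, hb', hFc⟩⟩
  on_goal 1 => refine star (alphaSeq n t - 1) (by omega) ?_
  on_goal 2 => refine star (alphaSeq n t + 1) (by omega) ?_
  on_goal 3 => refine star (alphaSeq n t - 2) (by omega) ?_
  on_goal 4 => refine star (alphaSeq n t + 2) (by omega) ?_
  all_goals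
    rw [hFc]
    simp only [Finset.mem_insert, Finset.mem_singleton]
    rintro x (rfl | rfl | rfl) hne <;> omega

end Spanning

lemma IsSpanningFacet.alphaSeq_not_mem_last_five {n s : ℕ} {F : Finset ℕ} (hn : 3 ≤ n)
    (hF : IsSpanningFacet n F) (hT : classT n s F) :
    alphaSeq n s ∉ ({0, 1, 2, n - 2, n - 1} : Finset ℕ) := by
  intro hlast
  have hs := (alphaSeq_mem_last_five_iff hT.1 hT.2.1).mp hlast
  refine hF.not_forall_adj (lam := 0) (by omega) fun x hx hne => ?_
  obtain ⟨q, hsq, hqn, rfl⟩ := hT.exists_index hx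
  have hq := (alphaSeq_mem_last_five_iff (by have := hT.1; omega) hqn).mpr (by omega)
  simp only [Finset.mem_insert, Finset.mem_singleton] at hq
  exact sqCycle_adj_of hn (by omega) (by omega) (by omega)

section LastVertex

variable {n s s1 s2 : ℕ} {F G : Finset ℕ}

lemma classT.le_of_cmpl_subset_insert {p : ℕ} (hF : classT n s F) (hG : classT n p G)
    (hsub : cmpl n G ⊆ insert (n - 1) (cmpl n F)) (hs : s ≤ n - 5) : s ≤ p := by
  obtain ⟨hp0, hpn, hpG, -⟩ := hG
  rcases Finset.mem_insert.mp (hsub hpG) with hlast | hpF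
  · have := (alphaSeq_mem_last_five_iff hp0 hpn).mp (by simp [hlast])
    omega
  · exact hF.le_of_mem_cmpl hp0 hpn hpF

lemma not_precOrd_of_cmpl_subset_insert (hdec : cDecomp n s s1 s2 F) (hs : s ≤ n - 5)
    (hD : ¬ memD n F) (hsub : cmpl n G ⊆ insert (n - 1) (cmpl n F)) (hG : n - 1 ∈ cmpl n G)
    (hF : n - 1 ∉ cmpl n F) : ¬ precOrd n G F := by
  rintro (⟨-, -, hllt⟩ | ⟨-, -, p, q, hpG, hqF, hpq⟩ | ⟨-, hDF, -⟩ | ⟨-, hDF, -⟩)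
  · obtain ⟨p, q, p1, p2, q1, q2, hdG, hdF, hlex⟩ := hllt
    obtain ⟨rfl, rfl, rfl⟩ := hdF.unique hdec
    have hqp := hdF.1.le_of_cmpl_subset_insert hdG.1 hsub hs
    obtain rfl : p = q := by omega
    obtain ⟨-, hp12, hp1, -, hGc⟩ := hdG
    obtain ⟨-, hq12, -, -, hFc⟩ := hdF
    have hq2 : q2 < n := (mem_cmpl.mp (hFc ▸ by simp : q2 ∈ cmpl n F)).1
    have hp2 : p2 < n := (mem_cmpl.mp (hGc ▸ by simp : p2 ∈ cmpl n G)).1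
    have hp1F := hsub (hGc ▸ by simp : p1 ∈ cmpl n G)
    rw [hGc] at hG
    rw [hFc] at hF hp1F
    simp only [Finset.mem_insert, Finset.mem_singleton] at hG hF hp1F
    omega
  · have := hdec.1.le_of_cmpl_subset_insert hpG hsub hs
    have := hqF.unique hdec.1
    omega
  all_goals exact hD hDF

lemma IsSpanningFacet.sub_one_mem_cmpl (hn : 6 ≤ n) (hSpan : IsSpanningFacet n F)
    (hdec : cDecomp n s s1 s2 F) : n - 1 ∈ cmpl n F := by
  have hs : s ≤ n - 5 := by
    have := (alphaSeq_mem_last_five_iff hdec.1.1 hdec.1.2.1).not.mp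
      (hSpan.alphaSeq_not_mem_last_five (by omega) hdec.1)
    omega
  by_contra hF
  have hlamF : n - 1 ∈ F := by
    by_contra hlamF
    exact hF (mem_cmpl.mpr ⟨by omega, hlamF⟩)
  obtain ⟨G, -, hprec, hGF⟩ := hSpan.2 _ hlamF
  exact not_precOrd_of_cmpl_subset_insert hdec hs (hSpan.not_memD hn)
    (cmpl_subset_insert_of_inter_eq_erase hGF) (mem_cmpl_of_inter_eq_erase hGF (by omega) hlamF)
    hF hprec

end LastVertex

/-- If `F` is a spanning facet of `Δ₃(Wₙ)` for the shelling order
`≺`, with `F ∈ T_s` and `F^c = {α_s} ⊔ {s₁, s₂}`, then `α_s ∉ {0, 1, 2, n−2, n−1}`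
and `s₂ = n−1`. -/
theorem spanning_alpha_and_s2 (n : ℕ) (hn : 9 ≤ n) (F : Finset ℕ)
    (hSpan : IsSpanningFacet n F) (s s1 s2 : ℕ) (hdec : cDecomp n s s1 s2 F) :
    alphaSeq n s ∉ ({0, 1, 2, n - 2, n - 1} : Finset ℕ) ∧ s2 = n - 1 := by
  have hlast := hSpan.alphaSeq_not_mem_last_five (by omega) hdec.1
  refine ⟨hlast, ?_⟩
  have hsub := hSpan.sub_one_mem_cmpl (by omega) hdec
  obtain ⟨-, hs12, -, -, hFc⟩ := hdec
  have hs2 : s2 < n := (mem_cmpl.mp (hFc ▸ by simp : s2 ∈ cmpl n F)).1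
  rw [hFc] at hsub
  simp only [Finset.mem_insert, Finset.mem_singleton] at hsub hlast
  omega
end

section
/- Let n ≥ 9 and let F be a facet of Δ₃(W_n) with F ∈ T_s and F^c = {α_s} ⊔ {s_1, s_2}. Suppose there exists μ ∈ F with α_s <_O μ and s_1 < μ, and let F' be the set with F'^c = (F^c∖{s_2}) ⊔ {μ}. If either F' is not a facet of Δ₃(W_n), or F' is a facet and F' ∈ D, then F is not a spanning facet for the shelling order ≺. -/
open Finset

/-! ### Auxiliary lemmas -/

lemma mod_eq_iff_aux (n x y : ℕ) (hn : 2 ≤ n) (hx : x ≤ n + 1) (hy : y < n) :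
    x % n = y ↔ ((x < n ∧ x = y) ∨ (x = n ∧ y = 0) ∨ (x = n + 1 ∧ y = 1)) := by
  by_cases h : x < n
  · rw [Nat.mod_eq_of_lt h]; omega
  · rcases (by omega : x = n ∨ x = n + 1) with rfl | rfl
    · simp [Nat.mod_self]; omega
    · have : (n + 1) % n = 1 := by
        rw [Nat.add_comm, Nat.add_mod_right, Nat.mod_eq_of_lt (by omega)]
      rw [this]; omega

set_option maxHeartbeats 1000000 in
lemma adj_iff (n x y : ℕ) (hn : 9 ≤ n) (hx : x < n) (hy : y < n) :
    (sqCycle n).Adj x y ↔ (x ≠ y ∧ (x + 1 = y ∨ x + 2 = y ∨ y + 1 = x ∨ y + 2 = x ∨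
      (x + 1 = n ∧ y = 0) ∨ (x + 2 = n ∧ y = 0) ∨ (x + 2 = n + 1 ∧ y = 1) ∨
      (y + 1 = n ∧ x = 0) ∨ (y + 2 = n ∧ x = 0) ∨ (y + 2 = n + 1 ∧ x = 1))) := by
  simp only [sqCycle]
  rw [mod_eq_iff_aux n (x+1) y (by omega) (by omega) hy,
    mod_eq_iff_aux n (x+2) y (by omega) (by omega) hy,
    mod_eq_iff_aux n (y+1) x (by omega) (by omega) hx,
    mod_eq_iff_aux n (y+2) x (by omega) (by omega) hx]
  omega

lemma alphaSeq_eq (n t : ℕ) (hn : 9 ≤ n) (h1 : 1 ≤ t) (h2 : t ≤ n) :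
    alphaSeq n t =
      if t % 2 = 1 then (if mVal n + t / 2 = n then 0 else mVal n + t / 2)
      else mVal n - t / 2 := by
  have hm : mVal n = (n + 1) / 2 := rfl
  unfold alphaSeq
  rcases Nat.even_or_odd t with he | ho
  · have ht2 : t % 2 = 0 := Nat.even_iff.mp he
    have hodd : Odd (t - 1) := by rw [Nat.odd_iff]; omega
    rw [hodd.neg_one_pow]
    have hle : t / 2 ≤ mVal n := by omega
    have h3 : ((mVal n : ℤ) + -1 * ((t / 2 : ℕ) : ℤ)) = ((mVal n - t / 2 : ℕ) : ℤ) := by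
      omega
    rw [h3, Int.emod_eq_of_lt (by omega) (by omega)]
    simp [ht2]
  · have ht2 : t % 2 = 1 := Nat.odd_iff.mp ho
    have heven : Even (t - 1) := by rw [Nat.even_iff]; omega
    rw [heven.neg_one_pow]
    have h3 : ((mVal n : ℤ) + 1 * ((t / 2 : ℕ) : ℤ)) = ((mVal n + t / 2 : ℕ) : ℤ) := by
      omega
    rw [h3]
    have hle : mVal n + t / 2 ≤ n := by omega
    by_cases hw : mVal n + t / 2 = n
    · rw [hw]; simp [ht2, hw]
    · rw [Int.emod_eq_of_lt (by omega) (by omega), if_pos ht2, if_neg hw]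
      omega

lemma alpha_one (n : ℕ) (hn : 9 ≤ n) : alphaSeq n 1 = mVal n := by
  have hm : mVal n = (n + 1) / 2 := rfl
  rw [alphaSeq_eq n 1 hn (by omega) (by omega),
    if_pos (by norm_num : (1 : ℕ) % 2 = 1), if_neg (show ¬(mVal n + 1 / 2 = n) by omega)]
  omega

lemma alpha_two (n : ℕ) (hn : 9 ≤ n) : alphaSeq n 2 = mVal n - 1 := by
  have hm : mVal n = (n + 1) / 2 := rfl
  rw [alphaSeq_eq n 2 hn (by omega) (by omega),
    if_neg (by norm_num : ¬((2 : ℕ) % 2 = 1))]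

lemma alpha_three (n : ℕ) (hn : 9 ≤ n) : alphaSeq n 3 = mVal n + 1 := by
  have hm : mVal n = (n + 1) / 2 := rfl
  rw [alphaSeq_eq n 3 hn (by omega) (by omega),
    if_pos (by norm_num : (3 : ℕ) % 2 = 1), if_neg (show ¬(mVal n + 3 / 2 = n) by omega)]

lemma alpha_inj (n : ℕ) (hn : 9 ≤ n) {s t : ℕ} (hs1 : 1 ≤ s) (hs2 : s ≤ n)
    (ht1 : 1 ≤ t) (ht2 : t ≤ n) (h : alphaSeq n s = alphaSeq n t) : s = t := by
  have hm : mVal n = (n + 1) / 2 := rfl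
  rw [alphaSeq_eq n s hn hs1 hs2, alphaSeq_eq n t hn ht1 ht2] at h
  split_ifs at h <;> omega

lemma ltO_idx_lt (n : ℕ) (hn : 9 ≤ n) {x y : ℕ} (i j : ℕ) (h : ltO n x y)
    (hi1 : 1 ≤ i) (hi2 : i ≤ n) (hj1 : 1 ≤ j) (hj2 : j ≤ n)
    (hxi : alphaSeq n i = x) (hyj : alphaSeq n j = y) : i < j := by
  obtain ⟨p, q, hp1, hpq, hqn, hpx, hqy⟩ := h
  have e1 : p = i := alpha_inj n hn hp1 (by omega) hi1 hi2 (hpx.trans hxi.symm)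
  have e2 : q = j := alpha_inj n hn (by omega) hqn hj1 hj2 (hqy.trans hyj.symm)
  omega

lemma ltO_asymm (n : ℕ) (hn : 9 ≤ n) {x y : ℕ} (h1 : ltO n x y) (h2 : ltO n y x) :
    False := by
  obtain ⟨p, q, hp1, hpq, hqn, hpx, hqy⟩ := h1
  have := ltO_idx_lt n hn q p h2 (by omega) hqn hp1 (by omega) hqy hpx
  omega

lemma classT_unique (n : ℕ) (hn : 9 ≤ n) {F : Finset ℕ} {s t : ℕ}
    (hs : classT n s F) (ht : classT n t F) : s = t := by
  obtain ⟨hs1, hs2, hsC, hsm⟩ := hs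
  obtain ⟨ht1, ht2, htC, htm⟩ := ht
  by_cases h : alphaSeq n s = alphaSeq n t
  · exact alpha_inj n hn hs1 hs2 ht1 ht2 h
  · exact absurd (hsm _ htC (fun hh => h hh.symm))
      (fun hl => ltO_asymm n hn hl (htm _ hsC h))

lemma two_of_three {a b c : ℕ} (hab : a ≠ b) (hac : a ≠ c) (hbc : b ≠ c)
    {S : Finset ℕ} (hS : S ⊆ {a, b, c}) (hcard : S.card = 2) :
    S = {a, b} ∨ S = {a, c} ∨ S = {b, c} := by
  obtain ⟨x, y, hxy, rfl⟩ := Finset.card_eq_two.mp hcard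
  have hx : x ∈ ({a, b, c} : Finset ℕ) := hS (by simp)
  have hy : y ∈ ({a, b, c} : Finset ℕ) := hS (by simp)
  simp only [Finset.mem_insert, Finset.mem_singleton] at hx hy
  rcases hx with rfl | rfl | rfl <;> rcases hy with rfl | rfl | rfl <;>
    simp_all [Finset.pair_comm] <;> tauto

lemma cmpl_sdiff (n : ℕ) (X : Finset ℕ) (hX : X ⊆ Finset.range n) :
    cmpl n (Finset.range n \ X) = X := by
  unfold cmpl
  ext y
  simp only [Finset.mem_sdiff]
  constructor
  · rintro ⟨hy, h⟩
    by_contra hx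
    exact h ⟨hy, hx⟩
  · intro hx
    exact ⟨hX hx, fun hh => hh.2 hx⟩

lemma sdiff_cmpl (n : ℕ) (G : Finset ℕ) (hG : G ⊆ Finset.range n) :
    Finset.range n \ cmpl n G = G := by
  unfold cmpl
  ext y
  simp only [Finset.mem_sdiff]
  constructor
  · rintro ⟨hy, h⟩
    by_contra hx
    exact h ⟨hy, hx⟩
  · intro hx
    exact ⟨hG hx, fun hh => hh.2 hx⟩

lemma not_conn (n : ℕ) (S : Finset ℕ) (v w : ℕ) (hv : v ∈ S) (hw : w ∈ S)
    (hvw : v ≠ w) (hiso : ∀ u ∈ S, ¬ (sqCycle n).Adj v u) :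
    ¬ ((sqCycle n).induce (↑S : Set ℕ)).Connected := by
  intro hcon
  have hv' : v ∈ (↑S : Set ℕ) := by simpa using hv
  have hw' : w ∈ (↑S : Set ℕ) := by simpa using hw
  suffices hkey : ∀ (x : (↑S : Set ℕ))
      (_ : ((sqCycle n).induce (↑S : Set ℕ)).Walk ⟨v, hv'⟩ x), v = ↑x by
    obtain ⟨p⟩ := hcon.preconnected ⟨v, hv'⟩ ⟨w, hw'⟩
    exact hvw (hkey _ p)
  intro x p
  cases p with
  | nil => rfl
  | @cons _ b _ hadj q =>
      exact absurd hadj (hiso (↑b) (by simpa using b.2))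

lemma conn3 (n a b c : ℕ) (S : Finset ℕ) (hS : S = {a, b, c})
    (h1 : (sqCycle n).Adj a b) (h2 : (sqCycle n).Adj b c) :
    ((sqCycle n).induce (↑S : Set ℕ)).Connected := by
  subst hS
  have hb' : b ∈ (↑({a, b, c} : Finset ℕ) : Set ℕ) := by simp
  rw [SimpleGraph.connected_iff]
  refine ⟨?_, ⟨⟨b, hb'⟩⟩⟩
  have hreach : ∀ z : (↑({a, b, c} : Finset ℕ) : Set ℕ),
      ((sqCycle n).induce (↑({a, b, c} : Finset ℕ) : Set ℕ)).Reachable z ⟨b, hb'⟩ := by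
    rintro ⟨z, hz⟩
    have hz' : z = a ∨ z = b ∨ z = c := by simpa using hz
    rcases hz' with rfl | rfl | rfl
    · exact SimpleGraph.Adj.reachable h1
    · exact SimpleGraph.Reachable.refl _
    · exact SimpleGraph.Adj.reachable h2.symm
  intro x y
  exact (hreach x).trans (hreach y).symm


lemma hardD (n : ℕ) (hn : 9 ≤ n) (F : Finset ℕ) (s s1 s2 μ : ℕ)
    (hdec : cDecomp n s s1 s2 F) (hμn : μ < n) (hμC : μ ∉ cmpl n F)
    (hlt : ltO n (alphaSeq n s) μ) (hs1μ : s1 < μ)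
    (h : ¬ IsFacet n (Finset.range n \ insert μ ((cmpl n F).erase s2)) ∨
      memD n (Finset.range n \ insert μ ((cmpl n F).erase s2)))
    (hD : memD n F) :
    alphaSeq n s = mVal n - 1 ∧ s1 = mVal n - 2 ∧ s2 = mVal n + 2 ∧ μ = mVal n + 1 := by
  have hm : mVal n = (n + 1) / 2 := rfl
  have hcT : classT n s F := hdec.1
  obtain ⟨⟨hsge, hsle, haC, hleast⟩, h12, ha1, ha2, hC⟩ := id hdec
  have hCsub : cmpl n F ⊆ Finset.range n := Finset.sdiff_subset
  have han : alphaSeq n s < n := by simpa using hCsub haC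
  have hs1n : s1 < n := by simpa using hCsub (by rw [hC]; simp : s1 ∈ cmpl n F)
  have hs2n : s2 < n := by simpa using hCsub (by rw [hC]; simp : s2 ∈ cmpl n F)
  have hμa : μ ≠ alphaSeq n s := fun e => hμC (by rw [hC]; simp [e])
  have hμs1 : μ ≠ s1 := fun e => hμC (by rw [hC]; simp [e])
  have hμs2 : μ ≠ s2 := fun e => hμC (by rw [hC]; simp [e])
  have hltas1 : ltO n (alphaSeq n s) s1 := hleast s1 (by rw [hC]; simp) (Ne.symm ha1)
  have hltas2 : ltO n (alphaSeq n s) s2 := hleast s2 (by rw [hC]; simp) (Ne.symm ha2)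
  have herase : (cmpl n F).erase s2 = {alphaSeq n s, s1} := by
    rw [hC]; ext x
    simp only [Finset.mem_erase, Finset.mem_insert, Finset.mem_singleton]
    omega
  rw [herase] at h
  set X := insert μ ({alphaSeq n s, s1} : Finset ℕ) with hX
  have hXsub : X ⊆ Finset.range n := by
    intro x hx
    rw [hX] at hx
    simp only [Finset.mem_insert, Finset.mem_singleton] at hx
    simp only [Finset.mem_range]
    omega
  have hXcard : X.card = 3 := by
    rw [hX, Finset.card_insert_of_notMem
        (by simp only [Finset.mem_insert, Finset.mem_singleton]; omega),
      Finset.card_insert_of_notMem (by simp only [Finset.mem_singleton]; omega),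
      Finset.card_singleton]
  have hcmplX : cmpl n (Finset.range n \ X) = X := cmpl_sdiff n X hXsub
  have hF'card : (Finset.range n \ X).card = n - 3 := by
    rw [Finset.card_sdiff_of_subset hXsub, hXcard, Finset.card_range]
  have hD'of : ∀ v w : ℕ, v ∈ X → w ∈ X → v ≠ w →
      (∀ u ∈ X, ¬ (sqCycle n).Adj v u) → memD n (Finset.range n \ X) := by
    intro v w hvX hwX hvw hiso
    refine h.resolve_left fun hnf => hnf ⟨Finset.sdiff_subset, hF'card, ?_⟩
    rw [hcmplX]
    exact not_conn n X v w hvX hwX hvw hiso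
  have hpin : memD n (Finset.range n \ X) →
      ((alphaSeq n s = mVal n + 1 ∧
          X = {alphaSeq n s, alphaSeq n s - 3, alphaSeq n s + 1}) ∨
        (alphaSeq n s = mVal n - 1 ∧
          X = {alphaSeq n s, alphaSeq n s - 1, alphaSeq n s + 3}) ∨
        (alphaSeq n s = mVal n + 1 ∧
          X = {alphaSeq n s, alphaSeq n s - 4, alphaSeq n s - 3}) ∨
        (mVal n - 1 ≤ alphaSeq n s ∧ alphaSeq n s ≤ n - 6 ∧
          X = {alphaSeq n s, alphaSeq n s + 3, alphaSeq n s + 4})) := by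
    intro hD'
    obtain ⟨u, ⟨hu1, hun, huC, huleast⟩, hforms'⟩ := hD'
    rw [hcmplX] at huC huleast hforms'
    have hua : alphaSeq n u = alphaSeq n s := by
      rw [hX] at huC
      simp only [Finset.mem_insert, Finset.mem_singleton] at huC
      rcases huC with he | he | he
      · exfalso
        have hx := huleast (alphaSeq n s) (by rw [hX]; simp) (by omega)
        rw [he] at hx
        exact ltO_asymm n hn hx hlt
      · exact he
      · exfalso
        have hx := huleast (alphaSeq n s) (by rw [hX]; simp) (by omega)
        rw [he] at hx
        exact ltO_asymm n hn hx hltas1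
    rw [hua] at hforms'
    exact hforms'
  obtain ⟨s', hcT', hforms⟩ := hD
  have hs's : s' = s := classT_unique n hn hcT' hcT
  rw [hs's] at hforms
  rcases hforms with ⟨haD, hCD⟩ | ⟨haD, hCD⟩ | ⟨haD, hCD⟩ | ⟨haD1, haD2, hCD⟩
  · -- (D1)  α = m+1, C = {α, α-3, α+1}
    exfalso
    have hxt := Finset.ext_iff.mp (hC.symm.trans hCD)
    have e1 := (hxt s1).mp (by simp)
    have e2 := (hxt s2).mp (by simp)
    have e3 := (hxt (alphaSeq n s - 3)).mpr (by simp)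
    have e4 := (hxt (alphaSeq n s + 1)).mpr (by simp)
    simp only [Finset.mem_insert, Finset.mem_singleton] at e1 e2 e3 e4
    have hs1v : s1 = mVal n - 2 := by omega
    have hs2v : s2 = mVal n + 2 := by omega
    have hs3 : s = 3 := alpha_inj n hn hsge hsle (by omega) (by omega)
      (by rw [alpha_three n hn]; omega)
    have hμm : μ ≠ mVal n := by
      intro e
      have := ltO_idx_lt n hn s 1 hlt hsge hsle (by omega) (by omega) rfl
        (by rw [alpha_one n hn]; omega)
      omega
    have hμm1 : μ ≠ mVal n - 1 := by
      intro e
      have := ltO_idx_lt n hn s 2 hlt hsge hsle (by omega) (by omega) rfl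
        (by rw [alpha_two n hn]; omega)
      omega
    have hμge : mVal n + 3 ≤ μ := by omega
    have hD' := hD'of s1 (alphaSeq n s) (by rw [hX]; simp) (by rw [hX]; simp) (by omega)
      (by
        intro u hu
        rw [hX] at hu
        simp only [Finset.mem_insert, Finset.mem_singleton] at hu
        intro hadj
        rcases hu with rfl | rfl | rfl
        · rw [adj_iff n _ _ hn (by omega) (by omega)] at hadj; omega
        · rw [adj_iff n _ _ hn (by omega) (by omega)] at hadj; omega
        · rw [adj_iff n _ _ hn (by omega) (by omega)] at hadj; omega)
    rcases hpin hD' with ⟨hA, hXe⟩ | ⟨hA, hXe⟩ | ⟨hA, hXe⟩ | ⟨hA1, hA2, hXe⟩ <;>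
      (have hxt' := Finset.ext_iff.mp hXe
       have f1 := (hxt' μ).mp (by rw [hX]; simp)
       have f2 := (hxt' s1).mp (by rw [hX]; simp)
       simp only [Finset.mem_insert, Finset.mem_singleton] at f1 f2
       omega)
  · -- (D2)  α = m-1, C = {α, α-1, α+3}
    have hxt := Finset.ext_iff.mp (hC.symm.trans hCD)
    have e1 := (hxt s1).mp (by simp)
    have e2 := (hxt s2).mp (by simp)
    have e3 := (hxt (alphaSeq n s - 1)).mpr (by simp)
    have e4 := (hxt (alphaSeq n s + 3)).mpr (by simp)
    simp only [Finset.mem_insert, Finset.mem_singleton] at e1 e2 e3 e4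
    have hs1v : s1 = mVal n - 2 := by omega
    have hs2v : s2 = mVal n + 2 := by omega
    have hs2' : s = 2 := alpha_inj n hn hsge hsle (by omega) (by omega)
      (by rw [alpha_two n hn]; omega)
    have hμm : μ ≠ mVal n := by
      intro e
      have := ltO_idx_lt n hn s 1 hlt hsge hsle (by omega) (by omega) rfl
        (by rw [alpha_one n hn]; omega)
      omega
    have hcases : μ = mVal n + 1 ∨ mVal n + 3 ≤ μ := by omega
    rcases hcases with hμv | hμge
    · exact ⟨haD, hs1v, hs2v, hμv⟩
    · exfalso
      have hD' := hD'of μ (alphaSeq n s) (by rw [hX]; simp) (by rw [hX]; simp) (by omega)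
        (by
          intro u hu
          rw [hX] at hu
          simp only [Finset.mem_insert, Finset.mem_singleton] at hu
          intro hadj
          rcases hu with rfl | rfl | rfl
          · rw [adj_iff n _ _ hn (by omega) (by omega)] at hadj; omega
          · rw [adj_iff n _ _ hn (by omega) (by omega)] at hadj; omega
          · rw [adj_iff n _ _ hn (by omega) (by omega)] at hadj; omega)
      rcases hpin hD' with ⟨hA, hXe⟩ | ⟨hA, hXe⟩ | ⟨hA, hXe⟩ | ⟨hA1, hA2, hXe⟩ <;>
        (have hxt' := Finset.ext_iff.mp hXe
         have f1 := (hxt' μ).mp (by rw [hX]; simp)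
         have f2 := (hxt' s1).mp (by rw [hX]; simp)
         simp only [Finset.mem_insert, Finset.mem_singleton] at f1 f2
         omega)
  · -- (D3)  α = m+1, C = {α, α-4, α-3}
    exfalso
    have hxt := Finset.ext_iff.mp (hC.symm.trans hCD)
    have e1 := (hxt s1).mp (by simp)
    have e2 := (hxt s2).mp (by simp)
    have e3 := (hxt (alphaSeq n s - 4)).mpr (by simp)
    have e4 := (hxt (alphaSeq n s - 3)).mpr (by simp)
    simp only [Finset.mem_insert, Finset.mem_singleton] at e1 e2 e3 e4
    have hs1v : s1 = mVal n - 3 := by omega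
    have hs2v : s2 = mVal n - 2 := by omega
    have hs3 : s = 3 := alpha_inj n hn hsge hsle (by omega) (by omega)
      (by rw [alpha_three n hn]; omega)
    have hμm : μ ≠ mVal n := by
      intro e
      have := ltO_idx_lt n hn s 1 hlt hsge hsle (by omega) (by omega) rfl
        (by rw [alpha_one n hn]; omega)
      omega
    have hμm1 : μ ≠ mVal n - 1 := by
      intro e
      have := ltO_idx_lt n hn s 2 hlt hsge hsle (by omega) (by omega) rfl
        (by rw [alpha_two n hn]; omega)
      omega
    have hμge : mVal n + 2 ≤ μ := by omega
    have hD' := hD'of s1 (alphaSeq n s) (by rw [hX]; simp) (by rw [hX]; simp) (by omega)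
      (by
        intro u hu
        rw [hX] at hu
        simp only [Finset.mem_insert, Finset.mem_singleton] at hu
        intro hadj
        rcases hu with rfl | rfl | rfl
        · rw [adj_iff n _ _ hn (by omega) (by omega)] at hadj; omega
        · rw [adj_iff n _ _ hn (by omega) (by omega)] at hadj; omega
        · rw [adj_iff n _ _ hn (by omega) (by omega)] at hadj; omega)
    rcases hpin hD' with ⟨hA, hXe⟩ | ⟨hA, hXe⟩ | ⟨hA, hXe⟩ | ⟨hA1, hA2, hXe⟩ <;>
      (have hxt' := Finset.ext_iff.mp hXe
       have f1 := (hxt' μ).mp (by rw [hX]; simp)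
       have f2 := (hxt' s1).mp (by rw [hX]; simp)
       simp only [Finset.mem_insert, Finset.mem_singleton] at f1 f2
       omega)
  · -- (D4)  m-1 ≤ α ≤ n-6, C = {α, α+3, α+4}
    exfalso
    have hxt := Finset.ext_iff.mp (hC.symm.trans hCD)
    have e1 := (hxt s1).mp (by simp)
    have e2 := (hxt s2).mp (by simp)
    have e3 := (hxt (alphaSeq n s + 3)).mpr (by simp)
    have e4 := (hxt (alphaSeq n s + 4)).mpr (by simp)
    simp only [Finset.mem_insert, Finset.mem_singleton] at e1 e2 e3 e4
    have hs1v : s1 = alphaSeq n s + 3 := by omega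
    have hs2v : s2 = alphaSeq n s + 4 := by omega
    have hμge : alphaSeq n s + 5 ≤ μ := by omega
    have hD' := hD'of (alphaSeq n s) s1 (by rw [hX]; simp) (by rw [hX]; simp) (by omega)
      (by
        intro u hu
        rw [hX] at hu
        simp only [Finset.mem_insert, Finset.mem_singleton] at hu
        intro hadj
        rcases hu with rfl | rfl | rfl
        · rw [adj_iff n _ _ hn (by omega) (by omega)] at hadj; omega
        · rw [adj_iff n _ _ hn (by omega) (by omega)] at hadj; omega
        · rw [adj_iff n _ _ hn (by omega) (by omega)] at hadj; omega)
    rcases hpin hD' with ⟨hA, hXe⟩ | ⟨hA, hXe⟩ | ⟨hA, hXe⟩ | ⟨hA1, hA2, hXe⟩ <;>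
      (have hxt' := Finset.ext_iff.mp hXe
       have f1 := (hxt' μ).mp (by rw [hX]; simp)
       have f2 := (hxt' s1).mp (by rw [hX]; simp)
       simp only [Finset.mem_insert, Finset.mem_singleton] at f1 f2
       omega)

set_option maxHeartbeats 2000000 in
/-- Let `F` be a facet of `Δ₃(Wₙ)` with `F ∈ T_s` and
`F^c = {α_s} ⊔ {s₁, s₂}`.  Suppose there is `μ ∈ F` with `α_s <_O μ` and `s₁ < μ`,
and let `F'` be the set with `F'^c = (F^c∖{s₂}) ⊔ {μ}`.  If either `F'` is not a
facet, or `F'` is a facet lying in `D`, then `F` is not a spanning facet for `≺`. -/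
theorem not_spanning_of_exchange (n : ℕ) (hn : 9 ≤ n) (F : Finset ℕ)
    (hF : IsFacet n F) (s s1 s2 : ℕ) (hdec : cDecomp n s s1 s2 F)
    (μ : ℕ) (hμ : μ ∈ F) (hlt : ltO n (alphaSeq n s) μ) (hs1 : s1 < μ)
    (F' : Finset ℕ)
    (hF'def : F' = Finset.range n \ insert μ ((cmpl n F).erase s2))
    (h : ¬ IsFacet n F' ∨ (IsFacet n F' ∧ memD n F')) :
    ¬ IsSpanningFacet n F := by
  intro hsp
  obtain ⟨hFfac, hall⟩ := hsp
  obtain ⟨G, hGfac, hGp, hGcap⟩ := hall μ hμ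
  have hm : mVal n = (n + 1) / 2 := rfl
  have hcT : classT n s F := hdec.1
  obtain ⟨⟨hsge, hsle, haC, hleast⟩, h12, ha1, ha2, hC⟩ := id hdec
  have hCsub : cmpl n F ⊆ Finset.range n := Finset.sdiff_subset
  have han : alphaSeq n s < n := by simpa using hCsub haC
  have hs1n : s1 < n := by simpa using hCsub (by rw [hC]; simp : s1 ∈ cmpl n F)
  have hs2n : s2 < n := by simpa using hCsub (by rw [hC]; simp : s2 ∈ cmpl n F)
  have hμn : μ < n := by simpa using hF.1 hμ
  have hμC : μ ∉ cmpl n F := fun hh => (Finset.mem_sdiff.mp hh).2 hμ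
  have hμa : μ ≠ alphaSeq n s := fun e => hμC (by rw [hC]; simp [e])
  have hμs1 : μ ≠ s1 := fun e => hμC (by rw [hC]; simp [e])
  have hμs2 : μ ≠ s2 := fun e => hμC (by rw [hC]; simp [e])
  have hltas1 : ltO n (alphaSeq n s) s1 := hleast s1 (by rw [hC]; simp) (Ne.symm ha1)
  have hltas2 : ltO n (alphaSeq n s) s2 := hleast s2 (by rw [hC]; simp) (Ne.symm ha2)
  have h' : ¬ IsFacet n (Finset.range n \ insert μ ((cmpl n F).erase s2)) ∨
      memD n (Finset.range n \ insert μ ((cmpl n F).erase s2)) := by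
    rw [← hF'def]
    exact h.imp id And.right
  have hpinF : ∀ t, classT n t F → t = s := fun t ht => classT_unique n hn ht hcT
  have hGsub : G ⊆ Finset.range n := hGfac.1
  have hGcard : G.card = n - 3 := hGfac.2.1
  have hμG : μ ∉ G := by
    intro hh
    have hx : μ ∈ G ∩ F := Finset.mem_inter.mpr ⟨hh, hμ⟩
    rw [hGcap] at hx
    exact (Finset.mem_erase.mp hx).1 rfl
  have hμCG : μ ∈ cmpl n G := Finset.mem_sdiff.mpr ⟨Finset.mem_range.mpr hμn, hμG⟩
  have hCGcard : (cmpl n G).card = 3 := by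
    unfold cmpl
    rw [Finset.card_sdiff_of_subset hGsub, Finset.card_range, hGcard]
    omega
  have hsub2 : (cmpl n G).erase μ ⊆ ({alphaSeq n s, s1, s2} : Finset ℕ) := by
    rw [← hC]
    intro y hy
    obtain ⟨hyμ, hyG⟩ := Finset.mem_erase.mp hy
    obtain ⟨hyr, hyG'⟩ := Finset.mem_sdiff.mp hyG
    refine Finset.mem_sdiff.mpr ⟨hyr, fun hyF => hyG' ?_⟩
    have hx : y ∈ F.erase μ := Finset.mem_erase.mpr ⟨hyμ, hyF⟩
    rw [← hGcap] at hx
    exact (Finset.mem_inter.mp hx).1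
  have hcard2 : ((cmpl n G).erase μ).card = 2 := by
    rw [Finset.card_erase_of_mem hμCG, hCGcard]
  have hCGe := (Finset.insert_erase hμCG).symm
  rcases two_of_three ha1 ha2 (by omega) hsub2 hcard2 with hE | hE | hE
  · -- cmpl G = {μ, α, s1}  (this is F')
    rw [hE] at hCGe
    have herase : (cmpl n F).erase s2 = {alphaSeq n s, s1} := by
      rw [hC]; ext x
      simp only [Finset.mem_erase, Finset.mem_insert, Finset.mem_singleton]
      omega
    have hGF' : F' = G := by
      rw [hF'def, herase,
        show (insert μ ({alphaSeq n s, s1} : Finset ℕ)) = cmpl n G from hCGe.symm,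
        sdiff_cmpl n G hGsub]
    rcases h with hnf | ⟨_, hDG⟩
    · exact hnf (by rw [hGF']; exact hGfac)
    · rw [hGF'] at hDG
      have hpinG : ∀ u, classT n u G → u = s := by
        intro u hu
        obtain ⟨hu1, hun, huC, huleast⟩ := hu
        rw [hCGe] at huC huleast
        simp only [Finset.mem_insert, Finset.mem_singleton] at huC
        rcases huC with he | he | he
        · exfalso
          have hx := huleast (alphaSeq n s) (by simp) (by omega)
          rw [he] at hx
          exact ltO_asymm n hn hx hlt
        · exact alpha_inj n hn hu1 hun hsge hsle he
        · exfalso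
          have hx := huleast (alphaSeq n s) (by simp) (by omega)
          rw [he] at hx
          exact ltO_asymm n hn hx hltas1
      rcases hGp with ⟨hnD, _, _⟩ | ⟨_, _, u, t, hu, ht, hut⟩ | ⟨hnD, _, _⟩ | ⟨_, hDF, _⟩
      · exact hnD hDG
      · have e1 := hpinG u hu
        have e2 := hpinF t ht
        omega
      · exact hnD hDG
      · obtain ⟨hav, hs1v, hs2v, hμv⟩ :=
          hardD n hn F s s1 s2 μ hdec hμn hμC hlt hs1 h' hDF
        exact hGfac.2.2 (conn3 n μ (alphaSeq n s) s1 (cmpl n G) hCGe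
          ((adj_iff n μ (alphaSeq n s) hn hμn han).mpr (by omega))
          ((adj_iff n (alphaSeq n s) s1 hn han hs1n).mpr (by omega)))
  · -- cmpl G = {μ, α, s2}
    rw [hE] at hCGe
    have hpinG : ∀ u, classT n u G → u = s := by
      intro u hu
      obtain ⟨hu1, hun, huC, huleast⟩ := hu
      rw [hCGe] at huC huleast
      simp only [Finset.mem_insert, Finset.mem_singleton] at huC
      rcases huC with he | he | he
      · exfalso
        have hx := huleast (alphaSeq n s) (by simp) (by omega)
        rw [he] at hx
        exact ltO_asymm n hn hx hlt
      · exact alpha_inj n hn hu1 hun hsge hsle he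
      · exfalso
        have hx := huleast (alphaSeq n s) (by simp) (by omega)
        rw [he] at hx
        exact ltO_asymm n hn hx hltas2
    have hCGset : cmpl n G = ({alphaSeq n s, μ, s2} : Finset ℕ) := by
      rw [hCGe]
      ext x
      simp only [Finset.mem_insert, Finset.mem_singleton]
      tauto
    have hkill : llt n G F → False := by
      intro hl
      obtain ⟨u, t, u1, u2, t1, t2, hdu, hdt, hcomp⟩ := hl
      obtain ⟨hctu, hu12, hau1, hau2, hCu⟩ := hdu
      obtain ⟨hctt, ht12, hat1, hat2, hCt⟩ := hdt
      have hus := hpinG u hctu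
      have hts := hpinF t hctt
      rw [hus] at hCu hau1 hau2
      rw [hts] at hCt hat1 hat2
      have hxt := Finset.ext_iff.mp (hCt.symm.trans hC)
      have g1 := (hxt t1).mp (by simp)
      have g2 := (hxt s1).mpr (by simp)
      have g3 := (hxt t2).mp (by simp)
      have hyt := Finset.ext_iff.mp (hCu.symm.trans hCGe)
      have g4 := (hyt u1).mp (by simp)
      simp only [Finset.mem_insert, Finset.mem_singleton] at g1 g2 g3 g4
      rcases hcomp with hc | ⟨hc0, hc⟩
      · omega
      · rcases hc with hc | ⟨hc1, hc2⟩ <;> omega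
    rcases hGp with ⟨_, _, hl⟩ | ⟨_, _, u, t, hu, ht, hut⟩ | ⟨_, hDF, _⟩ | ⟨_, _, hl⟩
    · exact hkill hl
    · have e1 := hpinG u hu
      have e2 := hpinF t ht
      omega
    · obtain ⟨hav, hs1v, hs2v, hμv⟩ :=
        hardD n hn F s s1 s2 μ hdec hμn hμC hlt hs1 h' hDF
      exact hGfac.2.2 (conn3 n (alphaSeq n s) μ s2 (cmpl n G) hCGset
        ((adj_iff n (alphaSeq n s) μ hn han hμn).mpr (by omega))
        ((adj_iff n μ s2 hn hμn hs2n).mpr (by omega)))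
    · exact hkill hl
  · -- cmpl G = {μ, s1, s2}
    rw [hE] at hCGe
    have hpinG : ∀ u, classT n u G → s < u := by
      intro u hu
      obtain ⟨hu1, hun, huC, _⟩ := hu
      rw [hCGe] at huC
      simp only [Finset.mem_insert, Finset.mem_singleton] at huC
      rcases huC with he | he | he
      · exact ltO_idx_lt n hn s u hlt hsge hsle hu1 hun rfl he
      · exact ltO_idx_lt n hn s u hltas1 hsge hsle hu1 hun rfl he
      · exact ltO_idx_lt n hn s u hltas2 hsge hsle hu1 hun rfl he
    have hkill : llt n G F → False := by
      intro hl
      obtain ⟨u, t, u1, u2, t1, t2, hdu, hdt, hcomp⟩ := hl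
      have hus := hpinG u hdu.1
      have hts := hpinF t hdt.1
      rcases hcomp with hc | ⟨hc, _⟩ <;> omega
    rcases hGp with ⟨_, _, hl⟩ | ⟨_, _, u, t, hu, ht, hut⟩ | ⟨_, _, u, t, hu, ht, hut⟩ | ⟨_, _, hl⟩
    · exact hkill hl
    · have e1 := hpinG u hu
      have e2 := hpinF t ht
      omega
    · have e1 := hpinG u hu
      have e2 := hpinF t ht
      omega
    · exact hkill hl
end

section
/- Let n ≥ 9 and let x, y ∈ V = {0,1,…,n−1}. Then: (i) if x < m, then x <_O y iff (y < x or y ≥ 2m−x); (ii) if x ≥ m, then x <_O y iff (y < 2m−x or y > x); (iii) if y < m, then x <_O y iff y < x < 2m−y; (iv) if y > m, then x <_O y iff 2m−y ≤ x < y. -/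
open Finset

/-- Position of `x` in the ordering `O`. -/
def posO (n x : ℕ) : ℕ :=
  if x = 0 then n else if x < (n+1)/2 then 2*((n+1)/2 - x) else 2*(x - (n+1)/2) + 1

lemma alphaSeq_odd (n k : ℕ) : alphaSeq n (2*k+1) = (mVal n + k) % n := by
  unfold alphaSeq
  have h1 : 2*k+1-1 = 2*k := by omega
  have h2 : (2*k+1)/2 = k := by omega
  rw [h1, h2, Even.neg_one_pow ⟨k, by ring⟩, one_mul]
  have h3 : ((mVal n : ℤ) + (k:ℤ)) = ((mVal n + k : ℕ) : ℤ) := by push_cast; ring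
  rw [h3, ← Int.natCast_mod, Int.toNat_natCast]

lemma alphaSeq_even (n k : ℕ) (hk : 1 ≤ k) (hkm : k ≤ mVal n) :
    alphaSeq n (2*k) = (mVal n - k) % n := by
  unfold alphaSeq
  have h1 : 2*k-1 = 2*(k-1)+1 := by omega
  have h2 : (2*k)/2 = k := by omega
  rw [h1, h2, Odd.neg_one_pow ⟨k-1, by ring⟩, neg_one_mul]
  have h3 : ((mVal n : ℤ) + -(k:ℤ)) = ((mVal n - k : ℕ) : ℤ) := by
    have : (k:ℤ) ≤ (mVal n : ℤ) := by exact_mod_cast hkm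
    push_cast [hkm]; ring
  rw [h3, ← Int.natCast_mod, Int.toNat_natCast]

lemma alphaSeq_posO (n x : ℕ) (hn : 9 ≤ n) (hx : x < n) :
    alphaSeq n (posO n x) = x ∧ 1 ≤ posO n x ∧ posO n x ≤ n := by
  have hm : mVal n = (n+1)/2 := rfl
  unfold posO
  by_cases h0 : x = 0
  · subst h0
    simp only [if_pos rfl, if_true]
    refine ⟨?_, by omega, by omega⟩
    rcases Nat.even_or_odd n with ⟨k, hk⟩ | ⟨k, hk⟩
    · have hkm : k = mVal n := by omega
      have he : n = 2*k := by omega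
      have h := alphaSeq_even n k (by omega) (by omega)
      rw [← he] at h
      rw [h, hkm]; simp
    · have he : n = 2*k+1 := by omega
      have h := alphaSeq_odd n k
      rw [← he] at h
      have h2 : mVal n + k = n := by omega
      rw [h, h2, Nat.mod_self]
  · by_cases h1 : x < (n+1)/2
    · rw [if_neg h0, if_pos h1]
      have hk1 : 1 ≤ (n+1)/2 - x := by omega
      rw [alphaSeq_even n ((n+1)/2 - x) hk1 (by omega)]
      have : mVal n - ((n+1)/2 - x) = x := by omega
      rw [this, Nat.mod_eq_of_lt hx]
      omega
    · rw [if_neg h0, if_neg h1]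
      rw [alphaSeq_odd n (x - (n+1)/2)]
      have : mVal n + (x - (n+1)/2) = x := by omega
      rw [this, Nat.mod_eq_of_lt hx]
      omega

lemma posO_alphaSeq (n s : ℕ) (hn : 9 ≤ n) (h1 : 1 ≤ s) (h2 : s ≤ n) :
    posO n (alphaSeq n s) = s := by
  have hm : mVal n = (n+1)/2 := rfl
  rcases Nat.even_or_odd s with ⟨k, hk⟩ | ⟨k, hk⟩
  · -- s = 2*k
    have hs : s = 2*k := by omega
    have hk1 : 1 ≤ k := by omega
    have hkm : k ≤ mVal n := by omega
    rw [hs, alphaSeq_even n k hk1 hkm]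
    by_cases hlt : k < mVal n
    · have hv : (mVal n - k) % n = mVal n - k := Nat.mod_eq_of_lt (by omega)
      rw [hv]
      unfold posO
      rw [if_neg (by omega), if_pos (by omega)]
      omega
    · have hkeq : k = mVal n := by omega
      have h2m : 2 * mVal n = n := by omega
      have : (mVal n - k) % n = 0 := by rw [hkeq]; simp
      rw [this]
      unfold posO
      rw [if_pos rfl]
      omega
  · -- s = 2*k+1
    have hs : s = 2*k+1 := by omega
    rw [hs, alphaSeq_odd n k]
    by_cases hlt : mVal n + k < n
    · rw [Nat.mod_eq_of_lt hlt]
      unfold posO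
      rw [if_neg (by omega), if_neg (by omega)]
      omega
    · have heq : mVal n + k = n := by omega
      rw [heq, Nat.mod_self]
      unfold posO
      rw [if_pos rfl]
      omega

lemma ltO_iff_posO (n x y : ℕ) (hn : 9 ≤ n) (hx : x < n) (hy : y < n) :
    ltO n x y ↔ posO n x < posO n y := by
  constructor
  · rintro ⟨s, t, hs1, hst, htn, hsx, hty⟩
    rw [← hsx, ← hty, posO_alphaSeq n s hn hs1 (by omega),
      posO_alphaSeq n t hn (by omega) htn]
    exact hst
  · intro h
    obtain ⟨hax, hx1, hxn⟩ := alphaSeq_posO n x hn hx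
    obtain ⟨hay, hy1, hyn⟩ := alphaSeq_posO n y hn hy
    exact ⟨posO n x, posO n y, hx1, h, hyn, hax, hay⟩

/-- For `n ≥ 9` and `x, y ∈ V = {0,…,n−1}`:
(i) if `x < m` then `x <_O y ↔ (y < x ∨ y ≥ 2m−x)`;
(ii) if `x ≥ m` then `x <_O y ↔ (y < 2m−x ∨ y > x)`;
(iii) if `y < m` then `x <_O y ↔ y < x < 2m−y`;
(iv) if `y > m` then `x <_O y ↔ 2m−y ≤ x < y`. -/
theorem ltO_characterization (n : ℕ) (hn : 9 ≤ n) (x y : ℕ)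
    (hx : x < n) (hy : y < n) :
    (x < mVal n → (ltO n x y ↔ (y < x ∨ 2 * mVal n - x ≤ y))) ∧
    (mVal n ≤ x → (ltO n x y ↔ (y < 2 * mVal n - x ∨ x < y))) ∧
    (y < mVal n → (ltO n x y ↔ (y < x ∧ x < 2 * mVal n - y))) ∧
    (mVal n < y → (ltO n x y ↔ (2 * mVal n - y ≤ x ∧ x < y))) := by
  have hm : mVal n = (n+1)/2 := rfl
  refine ⟨?_, ?_, ?_, ?_⟩ <;> intro h <;>
    rw [ltO_iff_posO n x y hn hx hy] <;>
    simp only [posO, mVal] at * <;> split_ifs <;> omega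
end
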